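/- arXiv:1812.02777 — 3 statements merged into one kernel-verified Lean document; each statement's English description precedes it below -/
import Mathlib

section
/- Let n ≥ 4 and let a, b, p, q ∈ ℂⁿ be nonzero vectors such that either (a,a) = (a,b) = (b,b) = 0 or (p,p) = (p,q) = (q,q) = 0, where (u,v) = Σ_i u_i·v_i. Define the functions P, Q, R, S on SO(n) by P(x) = Σ_{j,α} p_j·a_α·x_{jα}, Q(x) = Σ_{k,β} q_k·b_β·x_{kβ}, R(x) = Σ_{j,β} p_j·b_β·x_{jβ}, S(x) = Σ_{k,α} q_k·a_α·x_{kα}. Then the following identities of functions on SO(n) hold: κ(P,P) = −(1/2)·P², κ(Q,Q) = −(1/2)·Q², κ(R,R) = −(1/2)·R², κ(S,S) = −(1/2)·S², κ(P,Q) = −(1/2)·R·S, κ(R,S) = −(1/2)·P·Q, κ(P,R) = −(1/2)·P·R, κ(P,S) = −(1/2)·P·S, κ(Q,R) = −(1/2)·Q·R, κ(Q,S) = −(1/2)·Q·S; that is, the conditions (PP-QQ) of the paper's general scheme hold on SO(n) with μ = −1/2. -/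
open Matrix

/-! For `u, v ∈ ℂⁿ` let `⟨u, x v⟩ = Σ u_j v_α x_{jα}`. Right multiplication by `Y_rs` only
mixes the columns `r` and `s`, so `⟨u, x Y_rs v⟩ = (A_r v_s - A_s v_r) / √2` with `A = uᵀ x`.
Summing the products over `r < s` is half the sum over all `(r, s)`, which the Binet–Cauchy
identity evaluates; with `x xᵀ = 1` this gives
`κ(⟨u, · v⟩, ⟨u', · v'⟩)(x) = ½ ((u, u') (v, v') - ⟨u, x v'⟩ ⟨u', x v⟩)`.
Under either isotropy hypothesis, `(u, u') (v, v') = 0` for all `u, u' ∈ {p, q}` and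
`v, v' ∈ {a, b}`. -/

noncomputable def Yso (n : ℕ) (r s : Fin n) : Matrix (Fin n) (Fin n) ℝ :=
  (Real.sqrt 2)⁻¹ • (Matrix.single r s 1 - Matrix.single s r 1)

def SOGroup (n : ℕ) : Set (Matrix (Fin n) (Fin n) ℝ) :=
  {x | x * x.transpose = 1 ∧ x.det = 1}

noncomputable def kappaSO (n : ℕ) (F G : Matrix (Fin n) (Fin n) ℝ → ℂ)
    (x : Matrix (Fin n) (Fin n) ℝ) : ℂ :=
  ∑ r : Fin n, ∑ s : Fin n, if r < s then F (x * Yso n r s) * G (x * Yso n r s) else 0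

theorem two_nsmul_sum_sum_ite_lt {ι M : Type*} [Fintype ι] [LinearOrder ι] [AddCommMonoid M]
    {g : ι → ι → M} (hsymm : ∀ r s, g r s = g s r)
    (hdiag : ∀ r, g r r = 0) :
    2 • ∑ r, ∑ s, (if r < s then g r s else 0) = ∑ r, ∑ s, g r s := by
  have hsplit : ∀ r s, (if r < s then g r s else 0) + (if s < r then g s r else 0) = g r s := by
    intro r s
    rcases lt_trichotomy r s with h | rfl | h
    · simp [h, h.not_gt]
    · simp [hdiag]
    · simp [h, h.not_gt, hsymm r s]
  calc 2 • ∑ r, ∑ s, (if r < s then g r s else 0)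
      = ∑ r, ∑ s, (if r < s then g r s else 0) + ∑ r, ∑ s, (if s < r then g s r else 0) := by
        rw [two_nsmul, Finset.sum_comm (f := fun r s => if s < r then g s r else 0)]
    _ = ∑ r, ∑ s, g r s := by simp only [← Finset.sum_add_distrib, hsplit]

theorem binet_cauchy {ι R : Type*} [Fintype ι] [CommRing R] (a b c d : ι → R) :
    ∑ r, ∑ s, (a r * b s - a s * b r) * (c r * d s - c s * d r)
      = 2 * ((a ⬝ᵥ c) * (b ⬝ᵥ d) - (a ⬝ᵥ d) * (b ⬝ᵥ c)) := by
  have hexpand : ∀ r s, (a r * b s - a s * b r) * (c r * d s - c s * d r)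
      = (a r * c r) * (b s * d s) - (a r * d r) * (b s * c s)
        - (b r * c r) * (a s * d s) + (b r * d r) * (a s * c s) := fun r s => by ring
  simp only [hexpand, Finset.sum_add_distrib, Finset.sum_sub_distrib, ← Finset.mul_sum,
    ← Finset.sum_mul, dotProduct]
  ring

theorem vecMul_dotProduct_vecMul_of_mul_transpose_eq_one {ι R : Type*} [Fintype ι]
    [DecidableEq ι] [CommRing R] {X : Matrix ι ι R} (hX : X * Xᵀ = 1) (u u' : ι → R) :
    u ᵥ* X ⬝ᵥ u' ᵥ* X = u ⬝ᵥ u' := by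
  rw [← dotProduct_mulVec, ← mulVec_transpose, mulVec_mulVec, hX, one_mulVec]

theorem map_ofReal_mul {m n o : Type*} [Fintype n] (y : Matrix m n ℝ) (z : Matrix n o ℝ) :
    (y * z).map ((↑) : ℝ → ℂ) = y.map ((↑) : ℝ → ℂ) * z.map ((↑) : ℝ → ℂ) :=
  Matrix.map_mul (f := Complex.ofRealHom)

section MatrixCoeff

variable {n : ℕ}

noncomputable def matrixCoeff (u v : Fin n → ℂ) (x : Matrix (Fin n) (Fin n) ℝ) : ℂ :=
  ∑ j, ∑ α, u j * v α * (x j α : ℂ)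

theorem matrixCoeff_eq_vecMul_dotProduct (u v : Fin n → ℂ) (x : Matrix (Fin n) (Fin n) ℝ) :
    matrixCoeff u v x = u ᵥ* x.map (↑) ⬝ᵥ v := by
  simp only [matrixCoeff, dotProduct, vecMul, map_apply, Finset.sum_mul]
  rw [Finset.sum_comm]
  refine Finset.sum_congr rfl fun j _ => Finset.sum_congr rfl fun α _ => by ring

theorem matrixCoeff_mul_Yso (u v : Fin n → ℂ) (x : Matrix (Fin n) (Fin n) ℝ)
    (r s : Fin n) :
    matrixCoeff u v (x * Yso n r s)
      = (√2 : ℂ)⁻¹ * ((u ᵥ* x.map (↑)) r * v s - (u ᵥ* x.map (↑)) s * v r) := by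
  rw [matrixCoeff_eq_vecMul_dotProduct, map_ofReal_mul, ← vecMul_vecMul, ← dotProduct_mulVec]
  have hY : (Yso n r s).map ((↑) : ℝ → ℂ) = ((√2)⁻¹ : ℂ) • (single r s 1 - single s r 1) := by
    ext i j
    simp [Yso, single_apply, apply_ite Complex.ofReal]
  simp only [hY, smul_mulVec, sub_mulVec, single_mulVec_eq, dotProduct_smul, dotProduct_sub,
    dotProduct_single, smul_eq_mul]
  ring

theorem mul_transpose_map_ofReal {x : Matrix (Fin n) (Fin n) ℝ} (hx : x * xᵀ = 1) :
    x.map ((↑) : ℝ → ℂ) * (x.map (↑))ᵀ = 1 := by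
  rw [← transpose_map, ← map_ofReal_mul, hx]
  exact Matrix.map_one _ Complex.ofReal_zero Complex.ofReal_one

theorem kappaSO_matrixCoeff {x : Matrix (Fin n) (Fin n) ℝ} (hx : x * xᵀ = 1)
    (u v u' v' : Fin n → ℂ) :
    kappaSO n (matrixCoeff u v) (matrixCoeff u' v') x
      = 1 / 2 * ((u ⬝ᵥ u') * (v ⬝ᵥ v') - matrixCoeff u v' x * matrixCoeff u' v x) := by
  set A := u ᵥ* x.map (↑)
  set A' := u' ᵥ* x.map (↑)
  set g : Fin n → Fin n → ℂ := fun r s => (A r * v s - A s * v r) * (A' r * v' s - A' s * v' r)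
  have hsqrt : (√2 : ℂ)⁻¹ * (√2 : ℂ)⁻¹ = 1 / 2 := by
    rw [← mul_inv, ← Complex.ofReal_mul, Real.mul_self_sqrt zero_le_two]
    norm_num
  have hterm : ∀ r s, matrixCoeff u v (x * Yso n r s) * matrixCoeff u' v' (x * Yso n r s)
      = 1 / 2 * g r s := fun r s => by
    rw [matrixCoeff_mul_Yso, matrixCoeff_mul_Yso]
    linear_combination g r s * hsqrt
  have hsum : 2 • ∑ r, ∑ s, (if r < s then g r s else 0)
      = 2 * ((u ⬝ᵥ u') * (v ⬝ᵥ v') - matrixCoeff u v' x * matrixCoeff u' v x) := by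
    rw [two_nsmul_sum_sum_ite_lt (fun r s => by ring) (fun r => by ring), binet_cauchy,
      vecMul_dotProduct_vecMul_of_mul_transpose_eq_one (mul_transpose_map_ofReal hx),
      dotProduct_comm v A', matrixCoeff_eq_vecMul_dotProduct, matrixCoeff_eq_vecMul_dotProduct]
  calc kappaSO n (matrixCoeff u v) (matrixCoeff u' v') x
      = 1 / 2 * ∑ r, ∑ s, (if r < s then g r s else 0) := by
        simp only [kappaSO, hterm, Finset.mul_sum, mul_ite, mul_zero]
    _ = _ := by
        rw [two_nsmul] at hsum
        linear_combination 1 / 4 * hsum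

theorem kappaSO_matrixCoeff_of_mul_eq_zero {x : Matrix (Fin n) (Fin n) ℝ}
    (hx : x * xᵀ = 1) {u v u' v' : Fin n → ℂ} (h : (u ⬝ᵥ u') * (v ⬝ᵥ v') = 0) :
    kappaSO n (matrixCoeff u v) (matrixCoeff u' v') x
      = -(1 / 2) * (matrixCoeff u v' x * matrixCoeff u' v x) := by
  rw [kappaSO_matrixCoeff hx, h]
  ring

end MatrixCoeff

theorem dotProduct_eq_zero_of_isotropic_pair {ι R : Type*} [Fintype ι] [CommSemiring R]
    {a b v w : ι → R} (haa : a ⬝ᵥ a = 0) (hab : a ⬝ᵥ b = 0) (hbb : b ⬝ᵥ b = 0)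
    (hv : v = a ∨ v = b) (hw : w = a ∨ w = b) : v ⬝ᵥ w = 0 := by
  rcases hv with rfl | rfl <;> rcases hw with rfl | rfl
  exacts [haa, hab, dotProduct_comm v w ▸ hab, hbb]

theorem stmt_17_general (n : ℕ) (a b p q : Fin n → ℂ)
    (hiso : ((∑ i, a i * a i) = 0 ∧ (∑ i, a i * b i) = 0 ∧ (∑ i, b i * b i) = 0) ∨
            ((∑ i, p i * p i) = 0 ∧ (∑ i, p i * q i) = 0 ∧ (∑ i, q i * q i) = 0))
    (P Q R S : Matrix (Fin n) (Fin n) ℝ → ℂ)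
    (hPdef : P = fun x => ∑ j : Fin n, ∑ α : Fin n, p j * a α * (x j α : ℂ))
    (hQdef : Q = fun x => ∑ k : Fin n, ∑ β : Fin n, q k * b β * (x k β : ℂ))
    (hRdef : R = fun x => ∑ j : Fin n, ∑ β : Fin n, p j * b β * (x j β : ℂ))
    (hSdef : S = fun x => ∑ k : Fin n, ∑ α : Fin n, q k * a α * (x k α : ℂ)) :
    ∀ x ∈ SOGroup n,
      kappaSO n P P x = -(1 / 2 : ℂ) * (P x) ^ 2 ∧
      kappaSO n Q Q x = -(1 / 2 : ℂ) * (Q x) ^ 2 ∧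
      kappaSO n R R x = -(1 / 2 : ℂ) * (R x) ^ 2 ∧
      kappaSO n S S x = -(1 / 2 : ℂ) * (S x) ^ 2 ∧
      kappaSO n P Q x = -(1 / 2 : ℂ) * (R x * S x) ∧
      kappaSO n R S x = -(1 / 2 : ℂ) * (P x * Q x) ∧
      kappaSO n P R x = -(1 / 2 : ℂ) * (P x * R x) ∧
      kappaSO n P S x = -(1 / 2 : ℂ) * (P x * S x) ∧
      kappaSO n Q R x = -(1 / 2 : ℂ) * (Q x * R x) ∧
      kappaSO n Q S x = -(1 / 2 : ℂ) * (Q x * S x) := by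
  intro x hx
  obtain rfl : P = matrixCoeff p a := hPdef
  obtain rfl : Q = matrixCoeff q b := hQdef
  obtain rfl : R = matrixCoeff p b := hRdef
  obtain rfl : S = matrixCoeff q a := hSdef
  have hnull : ∀ {u u' v v' : Fin n → ℂ}, (u = p ∨ u = q) → (u' = p ∨ u' = q) →
      (v = a ∨ v = b) → (v' = a ∨ v' = b) → (u ⬝ᵥ u') * (v ⬝ᵥ v') = 0 := by
    intro u u' v v' hu hu' hv hv'
    rcases hiso with ⟨haa, hab, hbb⟩ | ⟨hpp, hpq, hqq⟩
    · rw [dotProduct_eq_zero_of_isotropic_pair haa hab hbb hv hv', mul_zero]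
    · rw [dotProduct_eq_zero_of_isotropic_pair hpp hpq hqq hu hu', zero_mul]
  refine ⟨?_, ?_, ?_, ?_, ?_, ?_, ?_, ?_, ?_, ?_⟩ <;>
    rw [kappaSO_matrixCoeff_of_mul_eq_zero hx.1 (hnull ?_ ?_ ?_ ?_)] <;>
    first | ring1 | simp

/-- Lemma 9.4: for `n ≥ 4` and nonzero `a, b, p, q ∈ ℂⁿ` with either
`(a,a) = (a,b) = (b,b) = 0` or `(p,p) = (p,q) = (q,q) = 0`, the functions
`P = Σ p_j a_α x_{jα}`, `Q = Σ q_k b_β x_{kβ}`, `R = Σ p_j b_β x_{jβ}`,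
`S = Σ q_k a_α x_{kα}` satisfy the conditions (PP-QQ) on `SO(n)` with `μ = -1/2`. -/
theorem stmt_17 (n : ℕ) (hn : 4 ≤ n) (a b p q : Fin n → ℂ)
    (ha : a ≠ 0) (hb : b ≠ 0) (hp : p ≠ 0) (hq : q ≠ 0)
    (hiso : ((∑ i, a i * a i) = 0 ∧ (∑ i, a i * b i) = 0 ∧ (∑ i, b i * b i) = 0) ∨
            ((∑ i, p i * p i) = 0 ∧ (∑ i, p i * q i) = 0 ∧ (∑ i, q i * q i) = 0))
    (P Q R S : Matrix (Fin n) (Fin n) ℝ → ℂ)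
    (hPdef : P = fun x => ∑ j : Fin n, ∑ α : Fin n, p j * a α * (x j α : ℂ))
    (hQdef : Q = fun x => ∑ k : Fin n, ∑ β : Fin n, q k * b β * (x k β : ℂ))
    (hRdef : R = fun x => ∑ j : Fin n, ∑ β : Fin n, p j * b β * (x j β : ℂ))
    (hSdef : S = fun x => ∑ k : Fin n, ∑ α : Fin n, q k * a α * (x k α : ℂ)) :
    ∀ x ∈ SOGroup n,
      kappaSO n P P x = -(1 / 2 : ℂ) * (P x) ^ 2 ∧
      kappaSO n Q Q x = -(1 / 2 : ℂ) * (Q x) ^ 2 ∧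
      kappaSO n R R x = -(1 / 2 : ℂ) * (R x) ^ 2 ∧
      kappaSO n S S x = -(1 / 2 : ℂ) * (S x) ^ 2 ∧
      kappaSO n P Q x = -(1 / 2 : ℂ) * (R x * S x) ∧
      kappaSO n R S x = -(1 / 2 : ℂ) * (P x * Q x) ∧
      kappaSO n P R x = -(1 / 2 : ℂ) * (P x * R x) ∧
      kappaSO n P S x = -(1 / 2 : ℂ) * (P x * S x) ∧
      kappaSO n Q R x = -(1 / 2 : ℂ) * (Q x * R x) ∧
      kappaSO n Q S x = -(1 / 2 : ℂ) * (Q x * S x) :=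
  stmt_17_general n a b p q hiso P Q R S hPdef hQdef hRdef hSdef
end

section
/- Let g_1, …, g_N ∈ A satisfy τ(g_j) = 0 for all j and κ(g_i, g_j) = −2·g_i·g_j for all i, j. Then for every positive integer k the family {g_1^k, …, g_N^k} is an eigenfamily: τ(g_j^k) = −2·k·(k−1)·g_j^k for all j, and κ(g_i^k, g_j^k) = −2·k²·g_i^k·g_j^k for all i, j. (In the paper this is applied with g_j = τ(f_j), where the f_j = P_j/Q are the proper biharmonic quotient functions on U(n), yielding the eigenfamilies E_k = {τ(f_j)^k}.) -/
/-- Proposition 10.2 (abstract form): if `g_1, …, g_N` satisfy `τ(g_j) = 0` and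
`κ(g_i, g_j) = -2·g_i·g_j`, then for every positive integer `k` the family
`{g_1^k, …, g_N^k}` is an eigenfamily: `τ(g_j^k) = -2k(k-1)·g_j^k` and
`κ(g_i^k, g_j^k) = -2k²·g_i^k·g_j^k`. -/
theorem stmt_18 {A : Type*} [CommRing A] [Algebra ℂ A]
    (tau : A → A) (kappa : A → A → A)
    (htau_lin : IsLinearMap ℂ tau)
    (hk_symm : ∀ f g : A, kappa f g = kappa g f)
    (hk_lin : ∀ f : A, IsLinearMap ℂ (kappa f))
    (hk_leib : ∀ f g h : A, kappa (f * g) h = f * kappa g h + g * kappa f h)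
    (htau_prod : ∀ f g : A, tau (f * g) = tau f * g + 2 * kappa f g + f * tau g)
    (N : ℕ) (g : Fin N → A)
    (hg : ∀ j, tau (g j) = 0)
    (hgg : ∀ i j, kappa (g i) (g j) = -2 * (g i * g j)) :
    ∀ k : ℕ, 0 < k →
      (∀ j, tau (g j ^ k) = (-2 * (k : ℂ) * ((k : ℂ) - 1)) • (g j ^ k)) ∧
      (∀ i j, kappa (g i ^ k) (g j ^ k) = (-2 * (k : ℂ) ^ 2) • (g i ^ k * g j ^ k)) := by
  -- power rule for kappa
  have hpow : ∀ (f h : A) (k : ℕ),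
      kappa (f ^ (k + 1)) h = ((k : ℂ) + 1) • (f ^ k * kappa f h) := by
    intro f h k
    induction k with
    | zero => simp
    | succ k ih =>
      have : f ^ (k + 2) = f ^ (k + 1) * f := by ring
      rw [this, hk_leib, ih]
      simp only [Algebra.smul_def, map_add, map_one]
      push_cast
      ring
  have h1 : ∀ i j (l : ℕ),
      kappa (g i) (g j ^ (l + 1)) = (-2 * ((l : ℂ) + 1)) • (g i * g j ^ (l + 1)) := by
    intro i j l
    rw [hk_symm, hpow, hgg]
    simp only [Algebra.smul_def, map_mul, map_add, map_one, map_neg, map_ofNat]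
    push_cast
    ring
  have h2 : ∀ i j (k l : ℕ),
      kappa (g i ^ (k + 1)) (g j ^ (l + 1)) =
        (-2 * ((k : ℂ) + 1) * ((l : ℂ) + 1)) • (g i ^ (k + 1) * g j ^ (l + 1)) := by
    intro i j k l
    rw [hpow, h1]
    simp only [Algebra.smul_def, map_mul, map_add, map_one, map_neg, map_ofNat]
    push_cast
    ring
  have htauK : ∀ j (k : ℕ),
      tau (g j ^ (k + 1)) = (-2 * ((k : ℂ) + 1) * (k : ℂ)) • (g j ^ (k + 1)) := by
    intro j k
    induction k with
    | zero => simp [hg]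
    | succ k ih =>
      have : g j ^ (k + 2) = g j * g j ^ (k + 1) := by ring
      rw [this, htau_prod, hg, h1, ih]
      simp only [Algebra.smul_def, map_mul, map_add, map_one, map_neg, map_ofNat]
      push_cast
      ring
  intro k hk
  obtain ⟨m, rfl⟩ := Nat.exists_eq_succ_of_ne_zero hk.ne'
  constructor
  · intro j
    rw [htauK]
    congr 1
    push_cast
    ring
  · intro i j
    rw [h2]
    congr 1
    push_cast
    ring
end

section
/- Let λ ∈ ℂ and let Q_1, …, Q_n ∈ A satisfy τ(Q_α) = λ·Q_α for all α and κ(Q_α, Q_γ) = −Q_α·Q_γ for all α, γ, and suppose Q_β is invertible for some fixed β. Then the quotients f_α = Q_α·Q_β⁻¹ form an orthogonal harmonic family: τ(Q_α·Q_β⁻¹) = 0 for every α, and κ(Q_α·Q_β⁻¹, Q_γ·Q_β⁻¹) = 0 for all α, γ. (In the paper this is applied with Q_α(z) = Σ_j q_j·z_{jα} on the unitary group U(n), where λ = −n and the stated κ-relations hold; each member of an orthogonal harmonic family is a harmonic morphism.) -/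
/-- Proposition 10.4 (abstract form): if `Q_1, …, Q_n` satisfy `τ(Q_α) = λ·Q_α` and
`κ(Q_α, Q_γ) = -Q_α·Q_γ`, and `Q_β` is invertible, then the quotients
`f_α = Q_α·Q_β⁻¹` form an orthogonal harmonic family: `τ(f_α) = 0` and
`κ(f_α, f_γ) = 0` for all `α, γ`. -/
theorem stmt_19 {A : Type*} [CommRing A] [Algebra ℂ A]
    (tau : A → A) (kappa : A → A → A)
    (htau_lin : IsLinearMap ℂ tau)
    (hk_symm : ∀ f g : A, kappa f g = kappa g f)
    (hk_lin : ∀ f : A, IsLinearMap ℂ (kappa f))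
    (hk_leib : ∀ f g h : A, kappa (f * g) h = f * kappa g h + g * kappa f h)
    (htau_prod : ∀ f g : A, tau (f * g) = tau f * g + 2 * kappa f g + f * tau g)
    (lam : ℂ) (n : ℕ) (Q : Fin n → A)
    (hQ : ∀ α, tau (Q α) = lam • Q α)
    (hQQ : ∀ α γ, kappa (Q α) (Q γ) = -(Q α * Q γ))
    (β : Fin n) [Invertible (Q β)] :
    (∀ α, tau (Q α * ⅟(Q β)) = 0) ∧
    (∀ α γ, kappa (Q α * ⅟(Q β)) (Q γ * ⅟(Q β)) = 0) := by
  set u := ⅟(Q β) with hu_def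
  have huQ : Q β * u = 1 := mul_invOf_self (Q β)
  have hsm : ∀ x : A, lam • x = algebraMap ℂ A lam * x := fun x => Algebra.smul_def lam x
  -- kappa 1 h = 0
  have hk1 : ∀ h : A, kappa 1 h = 0 := by
    intro h
    have h1 := hk_leib 1 1 h
    simp only [one_mul] at h1
    exact left_eq_add.mp h1
  -- tau 1 = 0
  have htau1 : tau 1 = 0 := by
    have h1 := htau_prod 1 1
    rw [one_mul, hk1, mul_one, mul_zero, add_zero, one_mul] at h1
    exact left_eq_add.mp h1
  -- kappa u h
  have hκu : ∀ h : A, kappa u h = -(u * u * kappa (Q β) h) := by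
    intro h
    have h1 := hk_leib (Q β) u h
    rw [huQ, hk1] at h1
    linear_combination -u * h1 - (kappa u h) * huQ
  have hκuQ : ∀ α, kappa u (Q α) = u * Q α := by
    intro α
    rw [hκu, hQQ]
    linear_combination u * Q α * huQ
  have hκuu : kappa u u = -(u * u) := by
    rw [hκu u, hk_symm (Q β) u, hκuQ β]
    linear_combination (-(u * u)) * huQ
  have htauu : tau u = -(algebraMap ℂ A lam * u) - 2 * u := by
    have h := htau_prod (Q β) u
    rw [huQ, htau1, hQ β, hk_symm, hκuQ β, hsm] at h
    linear_combination -u * h - (tau u + algebraMap ℂ A lam * u + 2 * u) * huQ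
  constructor
  · intro α
    rw [htau_prod, hQ α, hk_symm, hκuQ α, htauu, hsm]
    ring
  · intro α γ
    have e1 : kappa u (Q γ * u) = 0 := by
      rw [hk_symm, hk_leib (Q γ) u u, hκuu, hk_symm (Q γ) u, hκuQ γ]
      ring
    have e2 : kappa (Q α) (Q γ * u) = 0 := by
      rw [hk_symm, hk_leib (Q γ) u (Q α), hκuQ α, hQQ]
      ring
    rw [hk_leib, e1, e2]
    ring
end
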